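/- arXiv:1801.06022 — 7 statements merged into one kernel-verified Lean document; each statement's English description precedes it below -/
import Mathlib

section
/- For integers 0 < k < n, the binomial coefficient satisfies sqrt(n/(8k(n-k))) * 2^(n*H(k/n)) ≤ C(n,k) ≤ sqrt(n/(2πk(n-k))) * 2^(n*H(k/n)), where H(p) = -p*log₂(p) - (1-p)*log₂(1-p) is the binary entropy function. -/
noncomputable def binH (p : ℝ) : ℝ := -p * Real.logb 2 p - (1 - p) * Real.logb 2 (1 - p)

/-!
Write `m! = s_m · √(2m) · (m/e)^m` with `s_m = Stirling.stirlingSeq m`. Since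
`n^n / (k^k j^j) = 2^(n H(k/n))` for `j = n - k`, this gives exactly
`C(n,k) · s_k s_j = s_n · √(n/(2kj)) · 2^(n H(k/n))`, so both bounds are bounds on
`s_k s_j / s_n`. The sequence `s_m` decreases to `√π`, which gives `√π ≤ s_k s_j / s_n`.
For `s_k s_j ≤ 2 s_n`: if `k, j ≥ 2` then `s_k s_j ≤ s_2² = e⁴/16 < 2√π ≤ 2 s_n`; if `k = 1 < j`,
Robbins' bound `log s_j - log s_{j+1} ≤ 1/(12 j (j+1))` suffices; `k = j = 1` is the equality
`s_1² = 2 s_2`.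
-/

open Real
open scoped Nat

namespace Stirling

lemma stirlingSeq_pos {m : ℕ} (hm : m ≠ 0) : 0 < stirlingSeq m := by
  obtain ⟨m, rfl⟩ := Nat.exists_eq_succ_of_ne_zero hm
  exact stirlingSeq'_pos m

lemma stirlingSeq_le_of_le {a b : ℕ} (ha : a ≠ 0) (hab : a ≤ b) :
    stirlingSeq b ≤ stirlingSeq a := by
  obtain ⟨a, rfl⟩ := Nat.exists_eq_succ_of_ne_zero ha
  obtain ⟨b, rfl⟩ := Nat.exists_eq_succ_of_ne_zero (show b ≠ 0 by omega)
  exact stirlingSeq'_antitone (Nat.succ_le_succ_iff.mp hab)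

lemma stirlingSeq_two : stirlingSeq 2 = exp 1 ^ 2 / 4 := by
  have h : √(2 * (2 : ℕ)) = (2 : ℝ) := by
    rw [show (2 * (2 : ℕ) : ℝ) = 2 ^ 2 by norm_num, sqrt_sq zero_le_two]
  rw [stirlingSeq, h]
  field_simp
  norm_num [Nat.factorial]

lemma factorial_eq_stirlingSeq_mul {m : ℕ} (hm : m ≠ 0) :
    (m ! : ℝ) = stirlingSeq m * (√(2 * m) * (m / exp 1) ^ m) := by
  rw [stirlingSeq, div_mul_cancel₀]
  have : (0 : ℝ) < m := by positivity
  positivity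

lemma stirlingSeq_one_mul_le {j : ℕ} (hj : 2 ≤ j) :
    stirlingSeq 1 * stirlingSeq j ≤ 2 * stirlingSeq (j + 1) := by
  have hstep : log (stirlingSeq j) - log (stirlingSeq (j + 1)) ≤ 1 / 72 := by
    refine (log_stirlingSeq_sdiff_le j).trans ?_
    have : (2 : ℝ) ≤ j := by exact_mod_cast hj
    rw [div_le_div_iff₀ (by positivity) (by norm_num)]
    nlinarith
  have hlog1 : log (stirlingSeq 1) = 1 - log 2 / 2 := by
    rw [stirlingSeq_one, log_div (by positivity) (by positivity), log_exp, log_sqrt zero_le_two]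
  have hpos := stirlingSeq_pos (show j ≠ 0 by omega)
  have hpos' := stirlingSeq_pos (show j + 1 ≠ 0 by omega)
  have hpos1 := stirlingSeq_pos one_ne_zero
  rw [← log_le_log_iff (mul_pos hpos1 hpos) (mul_pos two_pos hpos'), log_mul hpos1.ne' hpos.ne',
    log_mul two_ne_zero hpos'.ne', hlog1]
  linarith [log_two_gt_d9]

lemma stirlingSeq_mul_le_two_mul {k j : ℕ} (hk : k ≠ 0) (hj : j ≠ 0) :
    stirlingSeq k * stirlingSeq j ≤ 2 * stirlingSeq (k + j) := by
  wlog hkj : k ≤ j generalizing k j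
  · simpa only [mul_comm, add_comm] using this hj hk (by omega)
  obtain rfl | hk2 : k = 1 ∨ 2 ≤ k := by omega
  · obtain rfl | hj2 : j = 1 ∨ 2 ≤ j := by omega
    · rw [stirlingSeq_one, stirlingSeq_two, div_mul_div_comm, mul_self_sqrt zero_le_two]
      linarith
    · simpa only [add_comm] using stirlingSeq_one_mul_le hj2
  · have hs2 : stirlingSeq 2 ^ 2 ≤ 2 * √π := by
      have he := exp_one_lt_d9
      have hpi : (1.77 : ℝ) ≤ √π := le_sqrt_of_sq_le (by linarith [pi_gt_d2])
      have he2 : exp 1 ^ 2 ≤ 7.39 := by nlinarith [exp_pos 1]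
      rw [stirlingSeq_two]
      nlinarith [sq_nonneg (exp 1)]
    calc stirlingSeq k * stirlingSeq j ≤ stirlingSeq 2 * stirlingSeq 2 :=
          mul_le_mul (stirlingSeq_le_of_le two_ne_zero hk2)
            (stirlingSeq_le_of_le two_ne_zero (hk2.trans hkj)) (stirlingSeq_pos hj).le
            (stirlingSeq_pos two_ne_zero).le
      _ ≤ 2 * √π := by rw [← sq]; exact hs2
      _ ≤ 2 * stirlingSeq (k + j) := by gcongr; exact sqrt_pi_le_stirlingSeq (by omega)

lemma sqrt_pi_mul_stirlingSeq_add_le {k j : ℕ} (hk : k ≠ 0) (hj : j ≠ 0) :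
    √π * stirlingSeq (k + j) ≤ stirlingSeq k * stirlingSeq j :=
  mul_le_mul (sqrt_pi_le_stirlingSeq hk) (stirlingSeq_le_of_le hj (by omega))
    (stirlingSeq_pos (by omega)).le (stirlingSeq_pos hk).le

end Stirling

open Stirling

lemma two_rpow_mul_binH {x y : ℝ} (hx : 0 < x) (hy : 0 < y) :
    (2 : ℝ) ^ ((x + y) * binH (x / (x + y))) = (x + y) ^ (x + y) / (x ^ x * y ^ y) := by
  have hs : 0 < x + y := by positivity
  have hcompl : 1 - x / (x + y) = y / (x + y) := by field_simp; ring
  rw [rpow_def_of_pos two_pos, ← exp_log (show 0 < (x + y) ^ (x + y) / (x ^ x * y ^ y) by positivity),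
    log_div (by positivity) (by positivity), log_mul (by positivity) (by positivity),
    log_rpow hs, log_rpow hx, log_rpow hy, binH, hcompl, logb, logb,
    log_div hx.ne' hs.ne', log_div hy.ne' hs.ne']
  congr 1
  field_simp
  ring

lemma choose_mul_stirlingSeq_mul {k j : ℕ} (hk : k ≠ 0) (hj : j ≠ 0) :
    ((k + j).choose k : ℝ) * (stirlingSeq k * stirlingSeq j) =
      stirlingSeq (k + j) * √((k + j) / (2 * k * j)) * 2 ^ ((k + j) * binH (k / (k + j))) := by
  have hkR : (0 : ℝ) < k := by positivity
  have hjR : (0 : ℝ) < j := by positivity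
  have hsqrt : √(2 * ((k + j : ℕ) : ℝ)) = √((k + j) / (2 * k * j)) * (√(2 * k) * √(2 * j)) := by
    rw [← sqrt_mul (by positivity), ← sqrt_mul (by positivity)]
    congr 1
    push_cast
    field_simp
  have hpow : (((k + j : ℕ) : ℝ) / exp 1) ^ (k + j) =
      2 ^ ((k + j) * binH (k / (k + j))) * ((k / exp 1) ^ k * (j / exp 1) ^ j) := by
    rw [two_rpow_mul_binH hkR hjR, ← Nat.cast_add, rpow_natCast, rpow_natCast, rpow_natCast]
    field_simp
    ring
  have hfact : ((k + j).choose k * k ! * j ! : ℝ) = (k + j)! := by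
    rw [Nat.choose_symm_add]
    exact_mod_cast Nat.add_choose_mul_factorial_mul_factorial k j
  rw [factorial_eq_stirlingSeq_mul hk, factorial_eq_stirlingSeq_mul hj,
    factorial_eq_stirlingSeq_mul (by omega), hsqrt, hpow] at hfact
  have hne : √(2 * k) * (k / exp 1) ^ k * (√(2 * j) * (j / exp 1) ^ j) ≠ 0 := by positivity
  apply mul_right_cancel₀ hne
  linear_combination hfact

theorem stmt_0 (n k : ℕ) (hk : 0 < k) (hkn : k < n) :
    Real.sqrt ((n : ℝ) / (8 * k * (n - k))) * 2 ^ ((n : ℝ) * binH ((k : ℝ) / n)) ≤ (n.choose k : ℝ) ∧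
    (n.choose k : ℝ) ≤ Real.sqrt ((n : ℝ) / (2 * Real.pi * k * (n - k))) * 2 ^ ((n : ℝ) * binH ((k : ℝ) / n)) := by
  obtain ⟨j, rfl⟩ := Nat.exists_eq_add_of_le hkn.le
  have hk0 : k ≠ 0 := hk.ne'
  have hj0 : j ≠ 0 := by omega
  have hsn := stirlingSeq_pos (show k + j ≠ 0 by omega)
  have hident := choose_mul_stirlingSeq_mul hk0 hj0
  push_cast
  rw [add_sub_cancel_left]
  set S := √((k + j) / (2 * k * j) : ℝ)
  set T : ℝ := 2 ^ ((k + j) * binH (k / (k + j)))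
  have hST : 0 ≤ S * T := by positivity
  have hC : (0 : ℝ) ≤ (k + j).choose k := by positivity
  constructor
  · have h8 : √((k + j) / (8 * k * j) : ℝ) = S / 2 := by
      rw [show ((k + j) / (8 * k * j) : ℝ) = (k + j) / (2 * k * j) / 2 ^ 2 by ring,
        sqrt_div' _ (by norm_num), sqrt_sq (by norm_num)]
    have hratio := stirlingSeq_mul_le_two_mul hk0 hj0
    rw [h8]
    nlinarith [mul_le_mul_of_nonneg_left hratio hC]
  · have hpi : √((k + j) / (2 * π * k * j) : ℝ) = S / √π := by
      rw [show ((k + j) / (2 * π * k * j) : ℝ) = (k + j) / (2 * k * j) / π by ring,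
        sqrt_div' _ pi_pos.le]
    have hratio := sqrt_pi_mul_stirlingSeq_add_le hk0 hj0
    have hsqpi : 0 < √π := sqrt_pos.mpr pi_pos
    rw [hpi, div_mul_eq_mul_div, le_div_iff₀ hsqpi]
    nlinarith [mul_le_mul_of_nonneg_left hratio hC]
end

section
/- For all p ∈ [0,1], the binary entropy function satisfies H(p)² ≤ 4p(1-p). -/
open Real Finset

/-- `log x ≤ sinh (log x) = (x - x⁻¹)/2` for `x ≥ 1`. -/
lemma log_le_half_sub_inv {x : ℝ} (hx : 1 ≤ x) : Real.log x ≤ (x - x⁻¹) / 2 := by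
  have hx0 : 0 < x := lt_of_lt_of_le one_pos hx
  have h1 : Real.log x ≤ Real.sinh (Real.log x) :=
    Real.self_le_sinh_iff.2 (Real.log_nonneg hx)
  rwa [Real.sinh_log hx0] at h1

/-- `-(p log p) ≤ √p (1 - p)` for `p ∈ [0,1]`. -/
lemma neg_mul_log_le {p : ℝ} (hp0 : 0 ≤ p) (hp1 : p ≤ 1) :
    -(p * Real.log p) ≤ Real.sqrt p * (1 - p) := by
  rcases eq_or_lt_of_le hp0 with h | h
  · simp [← h]
  · have hsp : 0 < Real.sqrt p := Real.sqrt_pos.2 h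
    have hsq : Real.sqrt p ^ 2 = p := Real.sq_sqrt hp0
    have hsp1 : Real.sqrt p ≤ 1 := by nlinarith [hsq, hsp]
    have hx : (1 : ℝ) ≤ (Real.sqrt p)⁻¹ := (one_le_inv₀ hsp).2 hsp1
    have h2 := log_le_half_sub_inv hx
    rw [Real.log_inv, inv_inv] at h2
    have hlogp : Real.log p = 2 * Real.log (Real.sqrt p) := by
      rw [Real.log_sqrt hp0]; ring
    have hinv : (Real.sqrt p)⁻¹ * Real.sqrt p = 1 := inv_mul_cancel₀ hsp.ne'
    nlinarith [mul_le_mul_of_nonneg_left h2 hsp.le, hsq, hsp.le]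

/-- Taylor-type lower bound: `t² ≤ (1+t)log(1+t) + (1-t)log(1-t)` for `0 ≤ t ≤ 2/5`. -/
lemma inner_bound {t : ℝ} (ht0 : 0 ≤ t) (ht : t ≤ 2/5) :
    t ^ 2 ≤ (1 + t) * Real.log (1 + t) + (1 - t) * Real.log (1 - t) := by
  have habs : |t| < 1 := by rw [abs_of_nonneg ht0]; linarith
  have habs' : |(-t)| < 1 := by rwa [abs_neg]
  have h1 := Real.abs_log_sub_add_sum_range_le habs 7
  have h2 := Real.abs_log_sub_add_sum_range_le habs' 7
  rw [abs_neg] at h2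
  rw [abs_le] at h1 h2
  have e1 : (∑ i ∈ Finset.range 7, t ^ (i + 1) / (i + 1)) =
      t + t^2/2 + t^3/3 + t^4/4 + t^5/5 + t^6/6 + t^7/7 := by
    norm_num [Finset.sum_range_succ]
  have e2 : (∑ i ∈ Finset.range 7, (-t) ^ (i + 1) / (i + 1)) =
      -t + t^2/2 - t^3/3 + t^4/4 - t^5/5 + t^6/6 - t^7/7 := by
    norm_num [Finset.sum_range_succ]
    ring
  rw [e1, abs_of_nonneg ht0] at h1
  rw [e2, abs_of_nonneg ht0, show (1 : ℝ) - -t = 1 + t by ring] at h2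
  have hl1 : Real.log (1 - t) ≥ -(t + t^2/2 + t^3/3 + t^4/4 + t^5/5 + t^6/6 + t^7/7)
      - t^8/(1-t) := by
    have := h1.2
    norm_num at this ⊢
    linarith
  have hl2 : Real.log (1 + t) ≥ -(-t + t^2/2 - t^3/3 + t^4/4 - t^5/5 + t^6/6 - t^7/7)
      - t^8/(1-t) := by
    have := h2.2
    norm_num at this ⊢
    linarith
  have h1t : (0:ℝ) < 1 - t := by linarith
  have h1t' : (0:ℝ) ≤ 1 + t := by linarith
  have key : (1 + t) * Real.log (1 + t) + (1 - t) * Real.log (1 - t) ≥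
      (1 + t) * (-(-t + t^2/2 - t^3/3 + t^4/4 - t^5/5 + t^6/6 - t^7/7) - t^8/(1-t))
      + (1 - t) * (-(t + t^2/2 + t^3/3 + t^4/4 + t^5/5 + t^6/6 + t^7/7) - t^8/(1-t)) := by
    have h3 := mul_le_mul_of_nonneg_left hl2 h1t'
    have h4 := mul_le_mul_of_nonneg_left hl1 h1t.le
    linarith
  have poly : (1 + t) * (-(-t + t^2/2 - t^3/3 + t^4/4 - t^5/5 + t^6/6 - t^7/7) - t^8/(1-t))
      + (1 - t) * (-(t + t^2/2 + t^3/3 + t^4/4 + t^5/5 + t^6/6 + t^7/7) - t^8/(1-t))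
      = t^2 + t^4/6 + t^6/15 + 2*t^8/7 - 2*(t^8/(1-t)) := by ring
  rw [poly] at key
  have hfin : 2*(t^8/(1-t)) ≤ t^4/6 + t^6/15 + 2*t^8/7 := by
    rw [show 2*(t^8/(1-t)) = (2*t^8)/(1-t) by ring, div_le_iff₀ h1t]
    have h4 : t^4 ≤ 16/625 := by
      calc t^4 ≤ (2/5:ℝ)^4 := pow_le_pow_left₀ ht0 ht 4
      _ = 16/625 := by norm_num
    nlinarith [pow_nonneg ht0 4, pow_nonneg ht0 6, pow_nonneg ht0 8,
      mul_le_mul_of_nonneg_left ht (pow_nonneg ht0 4),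
      mul_le_mul_of_nonneg_left ht (pow_nonneg ht0 6),
      mul_le_mul_of_nonneg_left ht (pow_nonneg ht0 8),
      mul_le_mul_of_nonneg_left h4 (pow_nonneg ht0 4)]
  linarith

lemma binH_nonneg {p : ℝ} (hp0 : 0 ≤ p) (hp1 : p ≤ 1) : 0 ≤ binH p := by
  unfold binH
  have h1 : Real.logb 2 p ≤ 0 := Real.logb_nonpos one_lt_two hp0 hp1
  have h2 : Real.logb 2 (1 - p) ≤ 0 := Real.logb_nonpos one_lt_two (by linarith) (by linarith)
  nlinarith

lemma binH_mul_log_two {p : ℝ} :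
    binH p * Real.log 2 = -(p * Real.log p) - (1 - p) * Real.log (1 - p) := by
  have hL : Real.log 2 ≠ 0 := by
    have := Real.log_two_gt_d9
    intro h; rw [h] at this; norm_num at this
  unfold binH Real.logb
  field_simp

/-- Inner-case helper: if `1 - t = 2*x`, `1 + t = 2*y` with `x + y = 1`, `x, y > 0`,
then `(1+t)log(1+t) + (1-t)log(1-t) = 2 log 2 + 2*(x*log x + y*log y)`. -/
lemma inner_expand {t x y : ℝ} (hx : 0 < x) (hy : 0 < y)
    (e1 : 1 - t = 2 * x) (e2 : 1 + t = 2 * y) :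
    (1 + t) * Real.log (1 + t) + (1 - t) * Real.log (1 - t)
      = 2 * Real.log 2 + 2 * (x * Real.log x + y * Real.log y) := by
  rw [e1, e2, Real.log_mul (by norm_num) hy.ne', Real.log_mul (by norm_num) hx.ne']
  have hxy : x + y = 1 := by linarith
  linear_combination 2 * Real.log 2 * hxy

set_option maxHeartbeats 1000000 in
theorem stmt_2 (p : ℝ) (hp : p ∈ Set.Icc (0 : ℝ) 1) :
    (binH p) ^ 2 ≤ 4 * p * (1 - p) := by
  obtain ⟨hp0, hp1⟩ := hp
  have hLgt : (0.6931471803 : ℝ) < Real.log 2 := Real.log_two_gt_d9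
  have hLlt : Real.log 2 < 0.6931471808 := Real.log_two_lt_d9
  have hLpos : 0 < Real.log 2 := by linarith
  have hH0 : 0 ≤ binH p := binH_nonneg hp0 hp1
  have hHL : binH p * Real.log 2 = -(p * Real.log p) - (1 - p) * Real.log (1 - p) :=
    binH_mul_log_two
  have hL2 : 0 < Real.log 2 ^ 2 := by positivity
  rcases le_or_gt (p * (1 - p)) (21/100) with hc | hc
  · -- outer case
    have ha2 : Real.sqrt p ^ 2 = p := Real.sq_sqrt hp0
    have hb2 : Real.sqrt (1 - p) ^ 2 = 1 - p := Real.sq_sqrt (by linarith)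
    set a := Real.sqrt p
    set b := Real.sqrt (1 - p)
    have ha0 : 0 ≤ a := Real.sqrt_nonneg _
    have hb0 : 0 ≤ b := Real.sqrt_nonneg _
    have h1 : -(p * Real.log p) ≤ a * (1 - p) := neg_mul_log_le hp0 hp1
    have h2 : -((1 - p) * Real.log (1 - p)) ≤ b * p := by
      have := neg_mul_log_le (p := 1 - p) (by linarith) (by linarith)
      rw [show 1 - (1 - p) = p by ring] at this
      exact this
    have hsum : binH p * Real.log 2 ≤ a * b ^ 2 + b * a ^ 2 := by
      have hid : a * b ^ 2 + b * a ^ 2 = a * (1 - p) + b * p := by rw [ha2, hb2]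
      rw [hHL, hid]
      linarith
    have hab : (a * b) ^ 2 ≤ 21/100 := by
      have h := mul_pow a b 2
      rw [ha2, hb2] at h
      linarith [h.le, h.ge, hc]
    have habn : 0 ≤ a * b := mul_nonneg ha0 hb0
    have hab46 : a * b ≤ 46/100 := by nlinarith
    have hHLnn : 0 ≤ binH p * Real.log 2 := mul_nonneg hH0 hLpos.le
    have hsq : (binH p * Real.log 2) ^ 2 ≤ (a * b ^ 2 + b * a ^ 2) ^ 2 := by
      have hrhs : 0 ≤ a * b ^ 2 + b * a ^ 2 := by positivity
      nlinarith
    have hiden : (a * b ^ 2 + b * a ^ 2) ^ 2 = p * (1 - p) * (1 + 2 * (a * b)) := by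
      have h : (a * b ^ 2 + b * a ^ 2) ^ 2 = a^2 * b^2 * (a^2 + b^2 + 2*(a*b)) := by ring
      rw [h, ha2, hb2]; ring
    have hpq0 : 0 ≤ p * (1 - p) := mul_nonneg hp0 (by linarith)
    have hL192 : (192/100 : ℝ) ≤ 4 * Real.log 2 ^ 2 := by nlinarith
    have hstep : p * (1 - p) * (1 + 2 * (a * b)) ≤ p * (1 - p) * (4 * Real.log 2 ^ 2) := by
      have h : 1 + 2 * (a * b) ≤ 4 * Real.log 2 ^ 2 := by linarith
      exact mul_le_mul_of_nonneg_left h hpq0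
    have hgoal : binH p ^ 2 * Real.log 2 ^ 2 ≤ 4 * p * (1 - p) * Real.log 2 ^ 2 := by
      have h : (binH p * Real.log 2) ^ 2 = binH p ^ 2 * Real.log 2 ^ 2 := by ring
      rw [← h]
      calc (binH p * Real.log 2) ^ 2 ≤ (a * b ^ 2 + b * a ^ 2) ^ 2 := hsq
        _ = p * (1 - p) * (1 + 2 * (a * b)) := hiden
        _ ≤ p * (1 - p) * (4 * Real.log 2 ^ 2) := hstep
        _ = 4 * p * (1 - p) * Real.log 2 ^ 2 := by ring
    exact le_of_mul_le_mul_right (by linarith) hL2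
  · -- inner case: p(1-p) > 21/100
    have hq0 : 0 < 1 - p := by nlinarith
    have hp0' : 0 < p := by nlinarith
    -- pick t ≥ 0 with 1 - t = 2*min(p,1-p)
    obtain ⟨t, ht0, e1, e2⟩ :
        ∃ t : ℝ, 0 ≤ t ∧
          ((1 - t) * Real.log (1 - t) + (1 + t) * Real.log (1 + t)
            = 2 * Real.log 2 + 2 * (p * Real.log p + (1 - p) * Real.log (1 - p))) ∧
          t ^ 2 = 1 - 4 * (p * (1 - p)) := by
      rcases le_or_gt p (1/2) with h | h
      · refine ⟨1 - 2 * p, by linarith, ?_, by ring⟩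
        have := inner_expand (t := 1 - 2 * p) hp0' hq0 (by ring) (by ring)
        linarith [this]
      · refine ⟨2 * p - 1, by linarith, ?_, by ring⟩
        have := inner_expand (t := 2 * p - 1) hq0 hp0' (by ring) (by ring)
        linarith [this]
    have ht16 : t ^ 2 ≤ 16/100 := by nlinarith
    have ht25 : t ≤ 2/5 := by nlinarith
    have hg : t ^ 2 ≤ (1 + t) * Real.log (1 + t) + (1 - t) * Real.log (1 - t) :=
      inner_bound ht0 ht25
    -- so binH p * log 2 ≤ log 2 - t²/2
    have hup : binH p * Real.log 2 ≤ Real.log 2 - t ^ 2 / 2 := by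
      rw [hHL]
      linarith
    have hHLnn : 0 ≤ binH p * Real.log 2 := mul_nonneg hH0 hLpos.le
    have hsq : (binH p * Real.log 2) ^ 2 ≤ (Real.log 2 - t ^ 2 / 2) ^ 2 := by nlinarith
    have hfinal : (Real.log 2 - t ^ 2 / 2) ^ 2 ≤ (1 - t ^ 2) * Real.log 2 ^ 2 := by
      have hLL : t ^ 2 ≤ 4 * Real.log 2 * (1 - Real.log 2) := by nlinarith
      have hmul := mul_le_mul_of_nonneg_left hLL (sq_nonneg t)
      nlinarith [hmul]
    have hgoal : binH p ^ 2 * Real.log 2 ^ 2 ≤ 4 * p * (1 - p) * Real.log 2 ^ 2 := by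
      have h4 : (4 : ℝ) * p * (1 - p) = 1 - t ^ 2 := by linarith [e2]
      rw [h4]
      nlinarith
    exact le_of_mul_le_mul_right (by linarith) hL2
end

section
/- For all real x ≥ 1, the function 𝓗(x) := x·H(1/x) satisfies 𝓗(x) ≤ 2·sqrt(x-1), where H is the binary entropy function. -/
open Real Set

noncomputable def gap (t : ℝ) : ℝ :=
  2 * log 2 * t - (1 + t ^ 2) * log (1 + t ^ 2) + t ^ 2 * log (t ^ 2)

noncomputable def gapSlope (t : ℝ) : ℝ := t * log (1 + t ^ 2) - 2 * (t * log t)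

noncomputable def gapSlopeDeriv (t : ℝ) : ℝ := log (1 + t ^ 2) - 2 * log t - 2 / (1 + t ^ 2)

lemma continuous_gap : Continuous gap :=
  ((continuous_const.mul continuous_id).sub
    (by fun_prop : Continuous fun t : ℝ => 1 + t ^ 2).mul_log).add (continuous_pow 2).mul_log

lemma continuous_gapSlope : Continuous gapSlope :=
  (continuous_id.mul ((by fun_prop : Continuous fun t : ℝ => 1 + t ^ 2).log
    fun t => by positivity)).sub (continuous_mul_log.const_mul 2)

lemma hasDerivAt_gap {t : ℝ} (ht : 0 < t) : HasDerivAt gap (2 * (log 2 - gapSlope t)) t := by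
  have h1 := (hasDerivAt_mul_log (x := 1 + t ^ 2) (by positivity)).comp t
    ((hasDerivAt_pow 2 t).const_add 1)
  have h2 := (hasDerivAt_mul_log (x := t ^ 2) (by positivity)).comp t (hasDerivAt_pow 2 t)
  refine (((hasDerivAt_id t).const_mul (2 * log 2)).sub h1 |>.add h2).congr_deriv ?_
  simp only [gapSlope, log_pow]
  push_cast
  ring

lemma hasDerivAt_gapSlope {t : ℝ} (ht : 0 < t) : HasDerivAt gapSlope (gapSlopeDeriv t) t := by
  have h1 := (hasDerivAt_id t).mul (((hasDerivAt_pow 2 t).const_add 1).log (by positivity))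
  have h2 := (hasDerivAt_mul_log ht.ne').const_mul 2
  refine (h1.sub h2).congr_deriv ?_
  rw [gapSlopeDeriv, id]
  field_simp
  ring

lemma hasDerivAt_gapSlopeDeriv {t : ℝ} (ht : 0 < t) :
    HasDerivAt gapSlopeDeriv (2 * (t ^ 2 - 1) / (t * (1 + t ^ 2) ^ 2)) t := by
  have h1 := ((hasDerivAt_pow 2 t).const_add 1).log (by positivity)
  have h2 := (hasDerivAt_log ht.ne').const_mul 2
  have h3 := (((hasDerivAt_pow 2 t).const_add 1).inv (by positivity)).const_mul 2
  refine ((h1.sub h2).sub h3).congr_deriv ?_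
  field_simp
  ring

lemma antitoneOn_gapSlopeDeriv : AntitoneOn gapSlopeDeriv (Ioc 0 1) := by
  refine antitoneOn_of_hasDerivWithinAt_nonpos (convex_Ioc 0 1)
    (f' := fun t => 2 * (t ^ 2 - 1) / (t * (1 + t ^ 2) ^ 2))
    (fun t ht => (hasDerivAt_gapSlopeDeriv ht.1).continuousAt.continuousWithinAt)
    (fun t ht => ?_) (fun t ht => ?_) <;> rw [interior_Ioc] at ht
  · exact (hasDerivAt_gapSlopeDeriv ht.1).hasDerivWithinAt
  · exact div_nonpos_of_nonpos_of_nonneg (by nlinarith [ht.1, ht.2]) (by positivity [ht.1])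

lemma gapSlopeDeriv_nonpos {t : ℝ} (ht : 1 ≤ t) : gapSlopeDeriv t ≤ 0 := by
  have ht0 : 0 < t := by linarith
  have hlog : log (1 + t ^ 2) - 2 * log t ≤ 1 / t ^ 2 := by
    have := log_le_sub_one_of_pos (by positivity : 0 < (1 + t ^ 2) / t ^ 2)
    rw [log_div (by positivity) (by positivity), log_pow] at this
    field_simp at this ⊢
    push_cast at this
    linarith
  have hinv : 1 / t ^ 2 ≤ 2 / (1 + t ^ 2) := by
    rw [div_le_div_iff₀ (by positivity) (by positivity)]
    nlinarith
  rw [gapSlopeDeriv]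
  linarith

lemma gapSlopeDeriv_one_third_pos : 0 < gapSlopeDeriv (1 / 3) := by
  have h : gapSlopeDeriv (1 / 3) = log 10 - 9 / 5 := by
    rw [gapSlopeDeriv, show (1 : ℝ) + (1 / 3) ^ 2 = 10 / 9 by norm_num, one_div, log_inv,
      log_div (by norm_num) (by norm_num), show (9 : ℝ) = 3 ^ 2 by norm_num, log_pow]
    norm_num
  have h8 : log 8 < log 10 := log_lt_log (by norm_num) (by norm_num)
  rw [show (8 : ℝ) = 2 ^ 3 by norm_num, log_pow, Nat.cast_ofNat] at h8
  linarith [log_two_gt_d9]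

lemma exists_gapSlopeDeriv_sign_change : ∃ c ∈ Icc (0 : ℝ) 1,
    (∀ t ∈ Ioc 0 c, 0 ≤ gapSlopeDeriv t) ∧ ∀ t, c ≤ t → gapSlopeDeriv t ≤ 0 := by
  have hcont : ContinuousOn gapSlopeDeriv (Icc (1 / 3) 1) := fun t ht =>
    (hasDerivAt_gapSlopeDeriv (by linarith [ht.1])).continuousAt.continuousWithinAt
  obtain ⟨c, hc, hc0⟩ := intermediate_value_Icc' (by norm_num) hcont
    ⟨gapSlopeDeriv_nonpos le_rfl, gapSlopeDeriv_one_third_pos.le⟩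
  have hc' : c ∈ Ioc 0 1 := ⟨by linarith [hc.1], hc.2⟩
  refine ⟨c, Ioc_subset_Icc_self hc', fun t ht => ?_, fun t ht => ?_⟩
  · exact hc0 ▸ antitoneOn_gapSlopeDeriv ⟨ht.1, ht.2.trans hc.2⟩ hc' ht.2
  · rcases le_total t 1 with ht1 | ht1
    · exact hc0 ▸ antitoneOn_gapSlopeDeriv hc' ⟨hc'.1.trans_le ht, ht1⟩ ht
    · exact gapSlopeDeriv_nonpos ht1

lemma exists_gapSlope_unimodal : ∃ c ∈ Icc (0 : ℝ) 1,
    MonotoneOn gapSlope (Icc 0 c) ∧ AntitoneOn gapSlope (Ici c) := by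
  obtain ⟨c, hc, hpos, hneg⟩ := exists_gapSlopeDeriv_sign_change
  refine ⟨c, hc, monotoneOn_of_hasDerivWithinAt_nonneg (convex_Icc 0 c)
    (f' := gapSlopeDeriv) continuous_gapSlope.continuousOn (fun t ht => ?_) (fun t ht => ?_),
    antitoneOn_of_hasDerivWithinAt_nonpos (convex_Ici c)
    (f' := gapSlopeDeriv) continuous_gapSlope.continuousOn (fun t ht => ?_) (fun t ht => ?_)⟩
  all_goals first | rw [interior_Icc] at ht | rw [interior_Ici] at ht
  · exact (hasDerivAt_gapSlope ht.1).hasDerivWithinAt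
  · exact hpos t ⟨ht.1, ht.2.le⟩
  · exact (hasDerivAt_gapSlope (hc.1.trans_lt ht)).hasDerivWithinAt
  · exact hneg t ht.le

lemma gapSlope_zero : gapSlope 0 = 0 := by
  simp [gapSlope]

lemma gapSlope_one : gapSlope 1 = log 2 := by
  norm_num [gapSlope]

lemma gap_zero : gap 0 = 0 := by
  simp [gap]

lemma gap_one : gap 1 = 0 := by
  norm_num [gap]

lemma monotoneOn_gap {a b : ℝ} (ha : 0 ≤ a) (h : ∀ t ∈ Ioo a b, gapSlope t ≤ log 2) :
    MonotoneOn gap (Icc a b) := by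
  refine monotoneOn_of_hasDerivWithinAt_nonneg (convex_Icc a b)
    (f' := fun t => 2 * (log 2 - gapSlope t)) continuous_gap.continuousOn
    (fun t ht => ?_) (fun t ht => ?_) <;> rw [interior_Icc] at ht
  · exact (hasDerivAt_gap (ha.trans_lt ht.1)).hasDerivWithinAt
  · linarith [h t ht]

lemma antitoneOn_gap {a b : ℝ} (ha : 0 ≤ a) (h : ∀ t ∈ Ioo a b, log 2 ≤ gapSlope t) :
    AntitoneOn gap (Icc a b) := by
  refine antitoneOn_of_hasDerivWithinAt_nonpos (convex_Icc a b)
    (f' := fun t => 2 * (log 2 - gapSlope t)) continuous_gap.continuousOn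
    (fun t ht => ?_) (fun t ht => ?_) <;> rw [interior_Icc] at ht
  · exact (hasDerivAt_gap (ha.trans_lt ht.1)).hasDerivWithinAt
  · linarith [h t ht]

lemma gap_nonneg {t : ℝ} (ht : 0 ≤ t) : 0 ≤ gap t := by
  obtain ⟨c, hc, hmono, hanti⟩ := exists_gapSlope_unimodal
  have hlog2 : log 2 ≤ gapSlope c := gapSlope_one ▸ hanti self_mem_Ici hc.2 hc.2
  -- `gap` increases on `[0, a]` and decreases on `[a, 1]`
  obtain ⟨a, ha, hla⟩ := intermediate_value_Icc hc.1 continuous_gapSlope.continuousOn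
    ⟨by rw [gapSlope_zero]; exact (log_pos one_lt_two).le, hlog2⟩
  rcases le_total t a with hta | hat
  · have hrise := monotoneOn_gap le_rfl fun s hs =>
      hla ▸ hmono ⟨hs.1.le, hs.2.le.trans ha.2⟩ ha hs.2.le
    exact gap_zero ▸ hrise ⟨le_rfl, ha.1⟩ ⟨ht, hta⟩ ht
  rcases le_total t 1 with ht1 | ht1
  · have hfall := antitoneOn_gap ha.1 fun s hs => by
      rcases le_total s c with hsc | hcs
      · exact hla ▸ hmono ha ⟨ha.1.trans hs.1.le, hsc⟩ hs.1.le
      · exact gapSlope_one ▸ hanti hcs hc.2 hs.2.le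
    exact gap_one ▸ hfall ⟨hat, ht1⟩ ⟨ha.2.trans hc.2, le_rfl⟩ ht1
  · have hrise := monotoneOn_gap (b := t) zero_le_one fun s hs =>
      gapSlope_one ▸ hanti hc.2 (hc.2.trans hs.1.le) hs.1.le
    exact gap_one ▸ hrise ⟨le_rfl, ht1⟩ ⟨ht1, le_rfl⟩ ht1

lemma one_add_sq_mul_binH (t : ℝ) : (1 + t ^ 2) * binH (1 / (1 + t ^ 2)) =
    ((1 + t ^ 2) * log (1 + t ^ 2) - t ^ 2 * log (t ^ 2)) / log 2 := by
  rcases eq_or_ne t 0 with rfl | ht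
  · simp [binH]
  have hx : 1 + t ^ 2 ≠ 0 := by positivity
  have hcompl : 1 - 1 / (1 + t ^ 2) = t ^ 2 / (1 + t ^ 2) := by
    field_simp
    ring
  rw [binH, hcompl, logb, logb, log_div one_ne_zero hx, log_one,
    log_div (pow_ne_zero 2 ht) hx]
  field_simp
  ring

theorem stmt_3 (x : ℝ) (hx : 1 ≤ x) :
    x * binH (1 / x) ≤ 2 * Real.sqrt (x - 1) := by
  obtain ⟨t, ht, rfl⟩ : ∃ t, 0 ≤ t ∧ x = 1 + t ^ 2 :=
    ⟨√(x - 1), sqrt_nonneg _, by rw [sq_sqrt (by linarith)]; ring⟩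
  rw [one_add_sq_mul_binH, add_sub_cancel_left, sqrt_sq ht, div_le_iff₀ (log_pos one_lt_two)]
  have := gap_nonneg ht
  rw [gap] at this
  linarith
end

section
/- Let m ≥ 1 and let y, y' ∈ ℕ^(m+1). If the coordinate sums of y and y' are equal, then for every t ∈ ℕ, the number of z ∈ ℕ^(m+1) with z ≥ y (coordinatewise), z ≥ y' (coordinatewise), and coordinate sum equal to (sum of y) + t, equals 0 if t < d, and equals C(t - d + m, m) if t ≥ d, where d = (1/2)·‖y - y'‖₁ is half the Manhattan distance between y and y'. -/
theorem stmt_5 (m : ℕ) (hm : 1 ≤ m) (y y' : Fin (m + 1) → ℕ)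
    (hsum : ∑ i, y i = ∑ i, y' i) (t : ℕ)
    (d : ℕ) (hd : d = (∑ i, ((y i : ℤ) - (y' i : ℤ)).natAbs) / 2) :
    Nat.card {z : Fin (m + 1) → ℕ //
        (∀ i, y i ≤ z i) ∧ (∀ i, y' i ≤ z i) ∧ ∑ i, z i = (∑ i, y i) + t} =
      if t < d then 0 else (t - d + m).choose m := by
  set w : Fin (m + 1) → ℕ := fun i => max (y i) (y' i) with hw
  have key : 2 * ∑ i, w i = 2 * ∑ i, y i + ∑ i, ((y i : ℤ) - (y' i : ℤ)).natAbs := by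
    have : ∀ i : Fin (m+1), 2 * w i = y i + y' i + ((y i : ℤ) - (y' i : ℤ)).natAbs := by
      intro i; simp only [hw]; omega
    rw [Finset.mul_sum, Finset.sum_congr rfl (fun i _ => this i), Finset.sum_add_distrib,
      Finset.sum_add_distrib, ← hsum]
    ring
  have hwsum : ∑ i, w i = ∑ i, y i + d := by omega
  split_ifs with ht
  · rw [Nat.card_eq_zero]
    left
    constructor
    rintro ⟨z, h1, h2, h3⟩
    have hle : ∑ i, w i ≤ ∑ i, z i :=
      Finset.sum_le_sum fun i _ => max_le (h1 i) (h2 i)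
    omega
  · push_neg at ht
    have e : {x : Fin (m+1) → ℕ // ∑ i, x i = t - d} ≃ {z : Fin (m + 1) → ℕ //
        (∀ i, y i ≤ z i) ∧ (∀ i, y' i ≤ z i) ∧ ∑ i, z i = (∑ i, y i) + t} := by
      refine ⟨fun x => ⟨fun i => w i + x.1 i, ?_, ?_, ?_⟩,
        fun z => ⟨fun i => z.1 i - w i, ?_⟩, ?_, ?_⟩
      · intro i; exact le_trans (le_max_left _ _) (Nat.le_add_right _ _)
      · intro i; exact le_trans (le_max_right _ _) (Nat.le_add_right _ _)
      · rw [Finset.sum_add_distrib, hwsum, x.2]; omega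
      · obtain ⟨z, h1, h2, h3⟩ := z
        have hwz : ∀ i ∈ Finset.univ, w i ≤ z i := fun i _ => max_le (h1 i) (h2 i)
        show ∑ i, (z i - w i) = t - d
        rw [Finset.sum_tsub_distrib Finset.univ hwz]
        omega
      · rintro ⟨x, hx⟩; ext i; simp
      · rintro ⟨z, h1, h2, h3⟩; ext i
        exact Nat.add_sub_cancel' (max_le (h1 i) (h2 i))
    rw [← Nat.card_congr e, ← Nat.card_congr (Sym.equivNatSumOfFintype (Fin (m+1)) (t - d)),
      Nat.card_eq_fintype_card, Sym.card_sym_eq_choose]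
    simp only [Fintype.card_fin]
    rw [show m + 1 + (t - d) - 1 = t - d + m by omega, ← Nat.choose_symm (Nat.le_add_right _ _)]
    congr 1
    omega
end

section
/- For positive integers N > m > 0 and t > 0, define d_{N,t}(m) = min { δ ∈ ℕ : C(t - δ + m, m) ≤ N }. Then d_{N,t}(m) ≤ max { 1, t - ⌊(log₂ N)² / (4m)⌋ }. -/
/-!
Put `L = ⌊(log₂ N)² / (4m)⌋` and `δ = max 1 (t - L)`; then `s = t - δ ≤ L`, so it suffices that
`C(s + m, m) ≤ N` whenever `4sm ≤ (log₂ N)²`. The term `C(s + m, m) pᵐ qˢ` of the binomial expansion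
of `(p + q)^(s + m) = 1` with `p = m / (s + m)` is at most `1`, so `log C(s + m, m)` is bounded by the
entropy `(s + m) log (s + m) - s log s - m log m`, which is at most `2 √(sm) log 2`: scaling to
`b x` and `b` with `x ≥ 1`, both sides agree at `x = 1`, and the derivatives compare because
`√x log (1 + 1/x)` decreases. Hence `C(s + m, m) ≤ 2^(2 √(sm)) ≤ N`.
-/

open Real Set

lemma sqrt_mul_log_add_one_sub_log_le {x : ℝ} (hx : 1 ≤ x) :
    √x * (log (x + 1) - log x) ≤ log 2 := by
  have hanti : AntitoneOn (fun x : ℝ => √x * (log (x + 1) - log x)) (Ici 1) := by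
    refine antitoneOn_of_hasDerivWithinAt_nonpos (convex_Ici 1)
      (f' := fun x => (2 * √x)⁻¹ * (log (x + 1) - log x) + √x * ((x + 1)⁻¹ - x⁻¹)) ?_ ?_ ?_
    · refine ContinuousOn.mul (by fun_prop) (.sub (.log (by fun_prop) ?_) (.log (by fun_prop) ?_))
        <;> intro y (hy : 1 ≤ y) <;> positivity
    · intro y hy
      rw [interior_Ici, mem_Ioi] at hy
      have hy0 : y ≠ 0 := by positivity
      exact ((hasDerivAt_sqrt hy0).mul
        (((hasDerivAt_id y).add_const 1).log (by positivity) |>.sub (hasDerivAt_log hy0)))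
        |>.hasDerivWithinAt |>.congr_deriv (by simp)
    · intro y hy
      rw [interior_Ici, mem_Ioi] at hy
      have hy0 : 0 < y := by positivity
      have hlog : log (y + 1) - log y ≤ y⁻¹ := by
        rw [← log_div (by positivity) hy0.ne']
        linarith [log_le_sub_one_of_pos (show 0 < (y + 1) / y by positivity),
          show (y + 1) / y = 1 + y⁻¹ by field_simp]
      obtain ⟨r, hr, rfl⟩ : ∃ r, 1 < r ∧ y = r ^ 2 :=
        ⟨√y, by rwa [lt_sqrt zero_le_one, one_pow], by simp [hy0.le]⟩
      rw [sqrt_sq (by positivity)]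
      have hderiv : (2 * r)⁻¹ * (r ^ 2)⁻¹ + r * ((r ^ 2 + 1)⁻¹ - (r ^ 2)⁻¹)
          = (1 - r ^ 2) / (2 * r ^ 3 * (r ^ 2 + 1)) := by
        field_simp; ring
      have hneg : (1 - r ^ 2) / (2 * r ^ 3 * (r ^ 2 + 1)) ≤ 0 :=
        div_nonpos_of_nonpos_of_nonneg (by nlinarith) (by positivity)
      linarith [mul_le_mul_of_nonneg_left hlog (show 0 ≤ (2 * r)⁻¹ by positivity)]
  simpa [one_add_one_eq_two] using hanti (mem_Ici.2 le_rfl) (mem_Ici.2 hx) hx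

lemma add_one_mul_log_add_one_sub_mul_log_le {x : ℝ} (hx : 1 ≤ x) :
    (x + 1) * log (x + 1) - x * log x ≤ 2 * √x * log 2 := by
  have hmono : MonotoneOn (fun x : ℝ => 2 * √x * log 2 - ((x + 1) * log (x + 1) - x * log x))
      (Ici 1) := by
    refine monotoneOn_of_hasDerivWithinAt_nonneg (convex_Ici 1)
      (f' := fun x => (√x)⁻¹ * log 2 - (log (x + 1) - log x)) ?_ ?_ ?_
    · refine .sub (by fun_prop) (.sub (.mul (by fun_prop) (.log (by fun_prop) ?_))
        (.mul (by fun_prop) (.log (by fun_prop) ?_))) <;> intro y (hy : 1 ≤ y) <;> positivity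
    · intro y hy
      rw [interior_Ici, mem_Ioi] at hy
      have hy0 : y ≠ 0 := by positivity
      have hy1 : y + 1 ≠ 0 := by positivity
      exact ((((hasDerivAt_sqrt hy0).const_mul 2).mul_const (log 2)).sub
        ((((hasDerivAt_id y).add_const 1).mul (((hasDerivAt_id y).add_const 1).log hy1)).sub
          ((hasDerivAt_id y).mul (hasDerivAt_log hy0))))
        |>.hasDerivWithinAt |>.congr_deriv (by simp only [id]; field_simp; ring)
    · intro y hy
      rw [interior_Ici, mem_Ioi] at hy
      have hs : 0 < √y := by positivity
      rw [sub_nonneg, ← div_eq_inv_mul, le_div_iff₀ hs, mul_comm]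
      exact sqrt_mul_log_add_one_sub_log_le hy.le
  simpa [one_add_one_eq_two] using hmono (mem_Ici.2 le_rfl) (mem_Ici.2 hx) hx

lemma add_mul_log_add_sub_le {a b : ℝ} (ha : 0 < a) (hb : 0 < b) :
    (a + b) * log (a + b) - a * log a - b * log b ≤ 2 * √(a * b) * log 2 := by
  wlog hba : b ≤ a generalizing a b
  · simpa only [add_comm b, mul_comm b, sub_right_comm] using this hb ha (le_of_not_ge hba)
  obtain ⟨x, hx, rfl⟩ : ∃ x, 1 ≤ x ∧ a = b * x :=
    ⟨a / b, (one_le_div hb).2 hba, by field_simp⟩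
  have hx0 : 0 < x := by positivity
  have key := mul_le_mul_of_nonneg_left (add_one_mul_log_add_one_sub_mul_log_le hx) hb.le
  rw [show b * x * b = b ^ 2 * x by ring, sqrt_mul (by positivity), sqrt_sq hb.le,
    show b * x + b = b * (x + 1) by ring, log_mul hb.ne' (by positivity),
    log_mul hb.ne' hx0.ne']
  linarith

lemma choose_mul_pow_mul_pow_le_one {p q : ℝ} (hp : 0 ≤ p) (hq : 0 ≤ q) (hpq : p + q = 1)
    {n k : ℕ} (hk : k ≤ n) : (n.choose k : ℝ) * p ^ k * q ^ (n - k) ≤ 1 := by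
  calc (n.choose k : ℝ) * p ^ k * q ^ (n - k)
      ≤ ∑ i ∈ Finset.range (n + 1), p ^ i * q ^ (n - i) * (n.choose i : ℝ) := by
        rw [mul_rotate]
        exact Finset.single_le_sum (f := fun i => p ^ i * q ^ (n - i) * (n.choose i : ℝ))
          (fun i _ => by positivity) (Finset.mem_range.2 (Nat.lt_succ_of_le hk))
    _ = 1 := by rw [← add_pow, hpq, one_pow]

lemma choose_add_le_two_rpow (s m : ℕ) :
    ((s + m).choose m : ℝ) ≤ 2 ^ (2 * √(s * m)) := by
  rcases s.eq_zero_or_pos with rfl | hs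
  · simp
  rcases m.eq_zero_or_pos with rfl | hm
  · simp
  have hs' : (0 : ℝ) < s := by exact_mod_cast hs
  have hm' : (0 : ℝ) < m := by exact_mod_cast hm
  have hn : (0 : ℝ) < s + m := by positivity
  have hbin := choose_mul_pow_mul_pow_le_one (n := s + m) (k := m) (p := m / (s + m))
    (q := s / (s + m)) (by positivity) (by positivity) (by field_simp; ring) (by omega)
  rw [Nat.add_sub_cancel] at hbin
  have hC : (0 : ℝ) < ((s + m).choose m : ℝ) := by exact_mod_cast Nat.choose_pos (by omega)
  rw [← log_le_log_iff hC (by positivity), log_rpow two_pos]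
  have hlog := log_le_log (by positivity) hbin
  rw [log_one, log_mul (by positivity) (by positivity), log_mul (by positivity) (by positivity),
    log_pow, log_pow, log_div hm'.ne' hn.ne', log_div hs'.ne' hn.ne'] at hlog
  nlinarith [add_mul_log_add_sub_le hs' hm']

lemma choose_add_le_of_four_mul_le {s m N : ℕ} (hN : 0 < N)
    (h : 4 * (s * m) ≤ logb 2 N ^ 2) : (s + m).choose m ≤ N := by
  have hsqrt : 2 * √(s * m) ≤ logb 2 N := by
    have h4 : 2 * √(s * m) = √(4 * (s * m)) := by
      rw [sqrt_mul zero_le_four, show (4 : ℝ) = 2 ^ 2 by norm_num, sqrt_sq zero_le_two]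
    rw [h4, ← sqrt_sq (logb_nonneg one_lt_two (Nat.one_le_cast.2 hN))]
    exact sqrt_le_sqrt h
  have := (choose_add_le_two_rpow s m).trans
    (rpow_le_rpow_of_exponent_le one_le_two hsqrt)
  rw [rpow_logb two_pos (by norm_num) (by exact_mod_cast hN)] at this
  exact_mod_cast this

theorem stmt_9_general (N t m : ℕ) (hm : 0 < m) (hN : m < N) :
    sInf {δ : ℕ | (t - δ + m).choose m ≤ N} ≤
      max 1 (t - ⌊(Real.logb 2 N) ^ 2 / (4 * m)⌋₊) := by
  set L := ⌊logb 2 N ^ 2 / (4 * m)⌋₊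
  refine Nat.sInf_le (choose_add_le_of_four_mul_le (by omega) ?_)
  have hsL : t - max 1 (t - L) ≤ L := by omega
  have hL : (L : ℝ) ≤ logb 2 N ^ 2 / (4 * m) := Nat.floor_le (by positivity)
  have := (le_div_iff₀ (by positivity : (0 : ℝ) < 4 * m)).1 ((Nat.cast_le.2 hsL).trans hL)
  linarith

theorem stmt_9 (N t m : ℕ) (hm : 0 < m) (hN : m < N) (ht : 0 < t) :
    sInf {δ : ℕ | (t - δ + m).choose m ≤ N} ≤
      max 1 (t - ⌊(Real.logb 2 N) ^ 2 / (4 * m)⌋₊) :=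
  stmt_9_general N t m hm hN
end

section
/- Let q ≥ 2, k ≥ 2, λ the Perron eigenvalue of T_q(k-1) as above, v̄ the vector with v_j = λ^(j-1) - (q-1)·Σ_{i=0}^{j-2} λ^i, and w̄ the vector with w_j = λ^(k-j). Then v̄ is a right eigenvector and w̄ is a left eigenvector of T_q(k-1) for eigenvalue λ, and all entries of v̄ and w̄ are strictly positive; in particular v_k = (q-1)/λ. -/
/-!
Extend `v` to the sequence `u n = λ^n - c ∑_{i<n} λ^i` with `c = q - 1`. It satisfies
`u 0 = 1`, `u (n+1) = λ u n - c`, and the characteristic equation says exactly `u k = 0`.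
Row `i` of `T v` is `c u 0 + u (i+1) = λ u i` (the last row uses `u k = 0`), and running the
recurrence backwards from `u k = 0` shows `u n > 0` for `n < k` and `u (k-1) = c / λ`.
For `w`, column `0` of `w T` is `c ∑ λ^i = λ^k` and column `j + 1` is `w j = λ w (j+1)`.
-/

open Finset Matrix

section TransferMatrix

variable {R : Type*}

def transferMatrix [Zero R] [One R] (c : R) (k : ℕ) : Matrix (Fin k) (Fin k) R :=
  Matrix.of fun i j => if (j : ℕ) = 0 then c else if (j : ℕ) = (i : ℕ) + 1 then 1 else 0

variable [Semiring R] (c : R) {k : ℕ}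

theorem transferMatrix_apply_eq_add (i j : Fin k) :
    transferMatrix c k i j =
      (if (j : ℕ) = 0 then c else 0) + if (j : ℕ) = (i : ℕ) + 1 then 1 else 0 := by
  by_cases hj : (j : ℕ) = 0 <;> simp [transferMatrix, hj]

theorem transferMatrix_mulVec_apply {u : ℕ → R} (hu : u k = 0) (i : Fin k) :
    (transferMatrix c k *ᵥ fun j : Fin k => u j) i = c * u 0 + u (i + 1) := by
  simp only [Matrix.mulVec, dotProduct, transferMatrix_apply_eq_add, add_mul, ite_mul,
    one_mul, zero_mul, sum_add_distrib]
  rw [Fin.sum_univ_eq_sum_range (fun j => if j = 0 then c * u j else 0),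
    Fin.sum_univ_eq_sum_range (fun j => if j = (i : ℕ) + 1 then u j else 0),
    sum_ite_eq', sum_ite_eq', if_pos (mem_range.2 i.pos)]
  by_cases hi : (i : ℕ) + 1 < k
  · rw [if_pos (mem_range.2 hi)]
  · rw [if_neg (by simpa using hi), show (i : ℕ) + 1 = k by omega, hu]

theorem vecMul_transferMatrix_apply (w : ℕ → R) (j : Fin k) :
    ((fun i : Fin k => w i) ᵥ* transferMatrix c k) j =
      if (j : ℕ) = 0 then (∑ i ∈ range k, w i) * c else w (j - 1) := by
  simp only [Matrix.vecMul, dotProduct, transferMatrix_apply_eq_add, mul_add, mul_ite,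
    mul_one, mul_zero, sum_add_distrib]
  rw [Fin.sum_univ_eq_sum_range (fun i => if (j : ℕ) = 0 then w i * c else 0),
    Fin.sum_univ_eq_sum_range (fun i => if (j : ℕ) = i + 1 then w i else 0)]
  by_cases hj : (j : ℕ) = 0
  · simp [hj, sum_mul]
  · have hcol : ∀ i, ((j : ℕ) = i + 1) ↔ (i = j - 1) := fun i => by omega
    simp only [hj, if_false, sum_const_zero, zero_add, hcol, sum_ite_eq',
      mem_range.2 (by omega : (j : ℕ) - 1 < k), if_true]

end TransferMatrix

section RightEigenSeq

variable {R : Type*} [CommRing R] (c l : R)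

def rightEigenSeq (n : ℕ) : R := l ^ n - c * ∑ i ∈ range n, l ^ i

theorem rightEigenSeq_zero : rightEigenSeq c l 0 = 1 := by
  simp [rightEigenSeq]

theorem rightEigenSeq_succ (n : ℕ) :
    rightEigenSeq c l (n + 1) = l * rightEigenSeq c l n - c := by
  simp only [rightEigenSeq, sum_range_succ', pow_succ', pow_zero, ← mul_sum]
  ring

variable {c l} {k : ℕ}

theorem rightEigenSeq_eq_zero (hroot : l ^ k = c * ∑ j ∈ range k, l ^ j) :
    rightEigenSeq c l k = 0 :=
  sub_eq_zero.2 hroot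

theorem transferMatrix_mulVec_rightEigenSeq (hk : rightEigenSeq c l k = 0) :
    (transferMatrix c k *ᵥ fun j : Fin k => rightEigenSeq c l j) =
      l • fun j : Fin k => rightEigenSeq c l j := by
  ext i
  rw [transferMatrix_mulVec_apply c hk, rightEigenSeq_zero, rightEigenSeq_succ, Pi.smul_apply,
    smul_eq_mul]
  ring

theorem mul_rightEigenSeq_pred (hk : rightEigenSeq c l k = 0) (hk1 : 1 ≤ k) :
    l * rightEigenSeq c l (k - 1) = c := by
  rw [← sub_eq_zero, ← rightEigenSeq_succ, Nat.sub_add_cancel hk1, hk]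

theorem rightEigenSeq_pos [LinearOrder R] [IsStrictOrderedRing R] (hc : 0 < c) (hl : 0 < l)
    (hk : rightEigenSeq c l k = 0) {n : ℕ} (hn : n < k) : 0 < rightEigenSeq c l n := by
  induction hn.le using Nat.decreasingInduction with
  | self => exact absurd hn (lt_irrefl k)
  | of_succ m hm ih =>
    have hnext : 0 ≤ rightEigenSeq c l (m + 1) := by
      rcases (show m + 1 ≤ k from hm).lt_or_eq with hlt | heq
      · exact (ih hlt).le
      · rw [heq, hk]
    have : 0 < l * rightEigenSeq c l m := by
      rw [rightEigenSeq_succ] at hnext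
      linarith
    exact pos_of_mul_pos_right this hl.le

end RightEigenSeq

theorem vecMul_transferMatrix_pow {R : Type*} [CommRing R] {c l : R} {k : ℕ}
    (hroot : l ^ k = c * ∑ j ∈ range k, l ^ j) :
    (fun j : Fin k => l ^ (k - 1 - (j : ℕ))) ᵥ* transferMatrix c k =
      l • fun j : Fin k => l ^ (k - 1 - (j : ℕ)) := by
  ext j
  rw [vecMul_transferMatrix_apply c (fun i => l ^ (k - 1 - i))]
  simp only [Pi.smul_apply, smul_eq_mul, ← pow_succ']
  split_ifs with hj
  · rw [sum_range_reflect (fun i => l ^ i), mul_comm, ← hroot, hj]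
    congr 1
    omega
  · congr 1
    omega

theorem stmt_14 (k q : ℕ) (hk : 2 ≤ k) (hq : 2 ≤ q) (lam : ℝ)
    (hlam1 : (q : ℝ) - 1 < lam)
    (hroot : lam ^ k = ((q : ℝ) - 1) * ∑ j ∈ Finset.range k, lam ^ j)
    (T : Matrix (Fin k) (Fin k) ℝ)
    (hT : ∀ i j, T i j =
      if (j : ℕ) = 0 then (q : ℝ) - 1 else if (j : ℕ) = (i : ℕ) + 1 then 1 else 0)
    (v w : Fin k → ℝ)
    (hv : ∀ j, v j = lam ^ (j : ℕ) - ((q : ℝ) - 1) * ∑ i ∈ Finset.range (j : ℕ), lam ^ i)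
    (hw : ∀ j, w j = lam ^ (k - 1 - (j : ℕ))) :
    T.mulVec v = lam • v ∧ Matrix.vecMul w T = lam • w ∧
    (∀ j, 0 < v j ∧ 0 < w j) ∧
    v ⟨k - 1, by omega⟩ = ((q : ℝ) - 1) / lam := by
  have hc : (0 : ℝ) < q - 1 := by
    have : (2 : ℝ) ≤ q := by exact_mod_cast hq
    linarith
  have hl : 0 < lam := hc.trans hlam1
  have hk0 := rightEigenSeq_eq_zero hroot
  obtain rfl : T = transferMatrix ((q : ℝ) - 1) k := Matrix.ext hT
  obtain rfl : v = fun j : Fin k => rightEigenSeq ((q : ℝ) - 1) lam j := funext hv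
  obtain rfl : w = fun j : Fin k => lam ^ (k - 1 - (j : ℕ)) := funext hw
  refine ⟨transferMatrix_mulVec_rightEigenSeq hk0, vecMul_transferMatrix_pow hroot,
    fun j => ⟨rightEigenSeq_pos hc hl hk0 j.2, by positivity⟩, ?_⟩
  exact eq_div_of_mul_eq hl.ne' (by rw [mul_comm]; exact mul_rightEigenSeq_pred hk0 (by omega))
end

section
/- With λ, v̄, w̄ as above and π̂_j = w_j·v_j, one has Σ_{i=1}^{k} π̂_i = λ^(k-1)·(λ - k(q-λ))/(λ-1); consequently the stationary distribution satisfies π₁ = π̂₁ / Σ_i π̂_i = (λ-1)/(λ - k(q-λ)). -/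
theorem stmt_15 (k q : ℕ) (hk : 2 ≤ k) (hq : 2 ≤ q) (lam : ℝ)
    (hlam1 : (q : ℝ) - 1 < lam) (hlam2 : lam < q)
    (hroot : lam ^ k = ((q : ℝ) - 1) * ∑ j ∈ Finset.range k, lam ^ j)
    (v w pihat : Fin k → ℝ)
    (hv : ∀ j, v j = lam ^ (j : ℕ) - ((q : ℝ) - 1) * ∑ i ∈ Finset.range (j : ℕ), lam ^ i)
    (hw : ∀ j, w j = lam ^ (k - 1 - (j : ℕ)))
    (hpihat : ∀ j, pihat j = w j * v j) :
    (∑ i, pihat i) = lam ^ (k - 1) * (lam - k * ((q : ℝ) - lam)) / (lam - 1) ∧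
    pihat ⟨0, by omega⟩ / (∑ i, pihat i) = (lam - 1) / (lam - k * ((q : ℝ) - lam)) := by
  have hq1 : (1:ℝ) ≤ (q:ℝ) - 1 := by
    have : (2:ℝ) ≤ q := by exact_mod_cast hq
    linarith
  have hlam_gt1 : 1 < lam := lt_of_le_of_lt hq1 hlam1
  have hlam_ne1 : lam - 1 ≠ 0 := by linarith
  have hlam_pos : 0 < lam := by linarith
  -- step 1: per-term identity
  have h1 : ∀ j : Fin k, (lam - 1) * pihat j
      = (lam - q) * lam ^ (k - 1) + ((q:ℝ) - 1) * lam ^ (k - 1 - (j:ℕ)) := by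
    intro j
    have hgeom : (∑ i ∈ Finset.range (j:ℕ), lam ^ i) * (lam - 1) = lam ^ (j:ℕ) - 1 :=
      geom_sum_mul lam j
    have hpow : lam ^ (k - 1 - (j:ℕ)) * lam ^ (j:ℕ) = lam ^ (k - 1) := by
      rw [← pow_add]
      congr 1
      omega
    have hv' : (lam - 1) * v j = (lam - q) * lam ^ (j:ℕ) + ((q:ℝ) - 1) := by
      rw [hv]
      nlinarith [hgeom]
    calc (lam - 1) * pihat j = lam ^ (k - 1 - (j:ℕ)) * ((lam - 1) * v j) := by
          rw [hpihat, hw]; ring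
      _ = (lam - q) * (lam ^ (k - 1 - (j:ℕ)) * lam ^ (j:ℕ)) + ((q:ℝ) - 1) * lam ^ (k - 1 - (j:ℕ)) := by
          rw [hv']; ring
      _ = (lam - q) * lam ^ (k - 1) + ((q:ℝ) - 1) * lam ^ (k - 1 - (j:ℕ)) := by rw [hpow]
  -- step 2: sum
  have hsum : (lam - 1) * (∑ i, pihat i)
      = (k:ℝ) * ((lam - q) * lam ^ (k - 1)) + ((q:ℝ) - 1) * ∑ j ∈ Finset.range k, lam ^ j := by
    rw [Finset.mul_sum]
    rw [Finset.sum_congr rfl (fun j _ => h1 j)]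
    rw [Finset.sum_add_distrib, Finset.sum_const, Finset.card_univ, Fintype.card_fin,
      nsmul_eq_mul, ← Finset.mul_sum]
    congr 1
    rw [Fin.sum_univ_eq_sum_range (fun j => lam ^ (k - 1 - j)) k]
    congr 1
    exact Finset.sum_range_reflect (fun j => lam ^ j) k
  have hS : (∑ i, pihat i) = lam ^ (k - 1) * (lam - k * ((q : ℝ) - lam)) / (lam - 1) := by
    rw [eq_div_iff hlam_ne1]
    have hpk : lam ^ k = lam ^ (k-1) * lam := by
      rw [← pow_succ]; congr 1; omega
    have := hsum
    rw [← hroot, hpk] at this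
    nlinarith [this]
  refine ⟨hS, ?_⟩
  have hp0 : pihat ⟨0, by omega⟩ = lam ^ (k - 1) := by
    rw [hpihat, hw, hv]
    simp
  rw [hp0, hS, div_div_eq_mul_div, mul_comm (lam ^ (k-1)) (lam - k * ((q:ℝ) - lam)),
    mul_comm (lam ^ (k-1)) (lam - 1), mul_div_mul_right _ _ (pow_ne_zero _ (ne_of_gt hlam_pos))]
end
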